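/- Fix η > 0 and 0 < s < 2η/σ². Then the discriminant Γ = 4σ⁴[(−a+η)² − 1]s² + 4σ²[(−a+η)(a² − 1) + 2η]s + (a² − 1)² of the quadratic 2σ²x² + [a² + 2σ²s(−a+η) − 1]x + β₁ = 0 is strictly positive, the quadratic has two distinct real roots t₁ < 0 < t₂, and the sequence (β_ℓ) is nonincreasing with β_ℓ ≤ β₁ < 0 for all ℓ ≥ 1 and β_ℓ → t₁ as ℓ → ∞. -/

import Mathlib

/-!
With `c = 2σ²`, `A = a² + 2σ²s(−a+η)` and `β = β₁`, the recursion is the iteration of the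
Möbius map `f x = (A x + β) / (1 − c x)`, whose fixed points are the roots `t₁, t₂` of
`c x² + (A − 1) x + β`. Since `β < 0`, the roots have opposite signs, and
`f x − x = c (x − t₁)(x − t₂) / (1 − c x)`, `f x − t₁ = (1 − c t₂)(x − t₁) / (1 − c x)`.
The key identity `A + cβ = (1 − c t₁)(1 − c t₂) = (a − σ²s)² ≥ 0` gives `c t₂ ≤ 1`, so `f` maps
`[t₁, x]` into itself for every `x ∈ [t₁, 0]`: the iterates decrease, stay above `t₁`, and their
limit is a nonpositive fixed point, i.e. `t₁`.
-/

open Filter Set Topology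

/-- The sequence `β_ℓ` from the paper: `β₁ = (σ²s² − 2ηs)/2` and
`β_ℓ = ([a² + 2σ²s(−a+η)]·β_{ℓ−1} + β₁)/(1 − 2σ²β_{ℓ−1})` for `ℓ ≥ 2`. -/
noncomputable def betaSeq (a σ η s : ℝ) : ℕ → ℝ
  | 0 => 0
  | 1 => (σ ^ 2 * s ^ 2 - 2 * η * s) / 2
  | (ℓ + 2) =>
      ((a ^ 2 + 2 * σ ^ 2 * s * (-a + η)) * betaSeq a σ η s (ℓ + 1)
            + (σ ^ 2 * s ^ 2 - 2 * η * s) / 2)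
        / (1 - 2 * σ ^ 2 * betaSeq a σ η s (ℓ + 1))

/-- The discriminant `Γ` of the quadratic `2σ²x² + [a² + 2σ²s(−a+η) − 1]x + β₁ = 0`. -/
noncomputable def Gam (a σ η s : ℝ) : ℝ :=
  4 * σ ^ 4 * ((-a + η) ^ 2 - 1) * s ^ 2
    + 4 * σ ^ 2 * ((-a + η) * (a ^ 2 - 1) + 2 * η) * s + (a ^ 2 - 1) ^ 2

theorem discrim_pos_of_neg {c b d : ℝ} (hc : 0 < c) (hd : d < 0) : 0 < discrim c b d := by
  rw [discrim]
  nlinarith [sq_nonneg b, mul_pos hc (neg_pos.2 hd)]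

theorem exists_vieta_of_neg {c b d : ℝ} (hc : 0 < c) (hd : d < 0) :
    ∃ t₁ t₂ : ℝ, t₁ < 0 ∧ 0 < t₂ ∧ c * (t₁ + t₂) = -b ∧ c * (t₁ * t₂) = d := by
  set r := √(discrim c b d)
  have hr : r ^ 2 = b ^ 2 - 4 * c * d := Real.sq_sqrt (discrim_pos_of_neg hc hd).le
  obtain ⟨hbr₁, hbr₂⟩ : -r < b ∧ b < r :=
    abs_lt_of_sq_lt_sq' (by nlinarith [mul_pos hc (neg_pos.2 hd)]) (Real.sqrt_nonneg _)
  refine ⟨(-b - r) / (2 * c), (-b + r) / (2 * c),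
    div_neg_of_neg_of_pos (by linarith) (by positivity), div_pos (by linarith) (by positivity),
    ?_, ?_⟩
  · field_simp
    ring
  · field_simp
    linear_combination -hr

theorem quadratic_eq_mul_sub_mul_sub {c b d t₁ t₂ : ℝ} (hsum : c * (t₁ + t₂) = -b)
    (hprod : c * (t₁ * t₂) = d) (x : ℝ) :
    c * x ^ 2 + b * x + d = c * (x - t₁) * (x - t₂) := by
  linear_combination x * hsum - hprod

noncomputable def riccatiMap (c A β x : ℝ) : ℝ := (A * x + β) / (1 - c * x)

section RiccatiMap

variable {c A β t₁ t₂ : ℝ}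

theorem riccatiMap_sub_self (hsum : c * (t₁ + t₂) = 1 - A) (hprod : c * (t₁ * t₂) = β)
    {x : ℝ} (hx : 1 - c * x ≠ 0) :
    riccatiMap c A β x - x = c * (x - t₁) * (x - t₂) / (1 - c * x) := by
  rw [riccatiMap, eq_div_iff hx, sub_mul, div_mul_cancel₀ _ hx]
  linear_combination x * hsum - hprod

theorem riccatiMap_sub_root (hsum : c * (t₁ + t₂) = 1 - A) (hprod : c * (t₁ * t₂) = β)
    {x : ℝ} (hx : 1 - c * x ≠ 0) :
    riccatiMap c A β x - t₁ = (1 - c * t₂) * (x - t₁) / (1 - c * x) := by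
  rw [riccatiMap, eq_div_iff hx, sub_mul, div_mul_cancel₀ _ hx]
  linear_combination x * hsum - hprod

theorem mul_root_le_one (hc : 0 < c) (ht₁ : t₁ < 0) (hsum : c * (t₁ + t₂) = 1 - A)
    (hprod : c * (t₁ * t₂) = β) (hAβ : 0 ≤ A + c * β) : c * t₂ ≤ 1 := by
  have hfac : A + c * β = (1 - c * t₁) * (1 - c * t₂) := by
    linear_combination hsum - c * hprod
  have hct₁ : 0 < 1 - c * t₁ := by nlinarith
  rw [hfac] at hAβ
  linarith [nonneg_of_mul_nonneg_right hAβ hct₁]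

theorem one_sub_mul_pos_of_nonpos (hc : 0 ≤ c) {x : ℝ} (hx : x ≤ 0) : 0 < 1 - c * x := by
  nlinarith

theorem riccatiMap_mem_Icc (hc : 0 ≤ c) (hsum : c * (t₁ + t₂) = 1 - A)
    (hprod : c * (t₁ * t₂) = β) (ht₂ : 0 ≤ t₂) (hct₂ : c * t₂ ≤ 1) {x : ℝ} (hx : x ∈ Icc t₁ 0) :
    riccatiMap c A β x ∈ Icc t₁ x := by
  have hD := one_sub_mul_pos_of_nonpos hc hx.2
  constructor
  · rw [← sub_nonneg, riccatiMap_sub_root hsum hprod hD.ne']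
    exact div_nonneg (mul_nonneg (by linarith) (sub_nonneg.2 hx.1)) hD.le
  · rw [← sub_nonpos, riccatiMap_sub_self hsum hprod hD.ne']
    exact div_nonpos_of_nonpos_of_nonneg
      (mul_nonpos_of_nonneg_of_nonpos (mul_nonneg hc (sub_nonneg.2 hx.1)) (by linarith [hx.2]))
      hD.le

theorem iterate_riccatiMap_mem_Icc (hc : 0 ≤ c) (hsum : c * (t₁ + t₂) = 1 - A)
    (hprod : c * (t₁ * t₂) = β) (ht₂ : 0 ≤ t₂) (hct₂ : c * t₂ ≤ 1) {x : ℝ} (hx : x ∈ Icc t₁ 0)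
    (n : ℕ) : (riccatiMap c A β)^[n] x ∈ Icc t₁ 0 := by
  induction n with
  | zero => exact hx
  | succ n ih =>
    rw [Function.iterate_succ_apply']
    have h := riccatiMap_mem_Icc hc hsum hprod ht₂ hct₂ ih
    exact ⟨h.1, h.2.trans ih.2⟩

theorem antitone_iterate_riccatiMap (hc : 0 ≤ c) (hsum : c * (t₁ + t₂) = 1 - A)
    (hprod : c * (t₁ * t₂) = β) (ht₂ : 0 ≤ t₂) (hct₂ : c * t₂ ≤ 1) {x : ℝ} (hx : x ∈ Icc t₁ 0) :
    Antitone fun n => (riccatiMap c A β)^[n] x := by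
  refine antitone_nat_of_succ_le fun n => ?_
  rw [Function.iterate_succ_apply']
  exact (riccatiMap_mem_Icc hc hsum hprod ht₂ hct₂
    (iterate_riccatiMap_mem_Icc hc hsum hprod ht₂ hct₂ hx n)).2

theorem eq_root_of_isFixedPt_riccatiMap (hc : 0 < c) (hsum : c * (t₁ + t₂) = 1 - A)
    (hprod : c * (t₁ * t₂) = β) (ht₂ : 0 < t₂) {x : ℝ} (hx : x ≤ 0)
    (hfix : Function.IsFixedPt (riccatiMap c A β) x) : x = t₁ := by
  have hD := one_sub_mul_pos_of_nonpos hc.le hx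
  have h := riccatiMap_sub_self hsum hprod hD.ne'
  rw [hfix.eq, sub_self, eq_comm, div_eq_zero_iff, mul_eq_zero, mul_eq_zero] at h
  rcases h with ((h | h) | h) | h
  · exact absurd h hc.ne'
  · linarith
  · linarith
  · exact absurd h hD.ne'

theorem tendsto_iterate_riccatiMap (hc : 0 < c) (hsum : c * (t₁ + t₂) = 1 - A)
    (hprod : c * (t₁ * t₂) = β) (ht₂ : 0 < t₂) (hct₂ : c * t₂ ≤ 1) {x : ℝ} (hx : x ∈ Icc t₁ 0) :
    Tendsto (fun n => (riccatiMap c A β)^[n] x) atTop (𝓝 t₁) := by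
  have hmem := iterate_riccatiMap_mem_Icc hc.le hsum hprod ht₂.le hct₂ hx
  have hlim := tendsto_atTop_ciInf (antitone_iterate_riccatiMap hc.le hsum hprod ht₂.le hct₂ hx)
    ⟨t₁, by rintro _ ⟨n, rfl⟩; exact (hmem n).1⟩
  set L := ⨅ n, (riccatiMap c A β)^[n] x
  have hL : L ≤ 0 := (isClosed_Icc.mem_of_tendsto hlim (Eventually.of_forall hmem)).2
  have hcont : ContinuousAt (riccatiMap c A β) L := by
    have := (one_sub_mul_pos_of_nonpos hc.le hL).ne'
    unfold riccatiMap
    fun_prop (disch := assumption)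
  rwa [eq_root_of_isFixedPt_riccatiMap hc hsum hprod ht₂ hL
    (isFixedPt_of_tendsto_iterate hlim hcont)] at hlim

end RiccatiMap

theorem betaSeq_succ_eq_iterate (a σ η s : ℝ) (n : ℕ) :
    betaSeq a σ η s (n + 1) =
      (riccatiMap (2 * σ ^ 2) (a ^ 2 + 2 * σ ^ 2 * s * (-a + η)) (betaSeq a σ η s 1))^[n]
        (betaSeq a σ η s 1) := by
  induction n with
  | zero => rfl
  | succ n ih =>
    rw [Function.iterate_succ_apply', ← ih]
    rfl

theorem betaSeq_one_neg {σ η s : ℝ} (a : ℝ) (hσ : 0 < σ) (hs0 : 0 < s)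
    (hs1 : s < 2 * η / σ ^ 2) : betaSeq a σ η s 1 < 0 := by
  have h := (lt_div_iff₀ (by positivity)).1 hs1
  change (σ ^ 2 * s ^ 2 - 2 * η * s) / 2 < 0
  nlinarith

theorem coeff_add_mul_betaSeq_one (a σ η s : ℝ) :
    a ^ 2 + 2 * σ ^ 2 * s * (-a + η) + 2 * σ ^ 2 * betaSeq a σ η s 1 = (a - σ ^ 2 * s) ^ 2 := by
  change _ + 2 * σ ^ 2 * ((σ ^ 2 * s ^ 2 - 2 * η * s) / 2) = _
  ring

theorem Gam_eq_discrim (a σ η s : ℝ) :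
    Gam a σ η s =
      discrim (2 * σ ^ 2) (a ^ 2 + 2 * σ ^ 2 * s * (-a + η) - 1) (betaSeq a σ η s 1) := by
  change _ = discrim _ _ ((σ ^ 2 * s ^ 2 - 2 * η * s) / 2)
  rw [Gam, discrim]
  ring

theorem statement10_general (a σ η s : ℝ) (hσ : 0 < σ)
    (hs0 : 0 < s) (hs1 : s < 2 * η / σ ^ 2) :
    -- the discriminant is strictly positive
    0 < Gam a σ η s ∧
    -- the quadratic has two distinct real roots t₁ < 0 < t₂
    (∃ t₁ t₂ : ℝ,
      t₁ < 0 ∧ 0 < t₂ ∧ t₁ < t₂ ∧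
      (2 * σ ^ 2 * t₁ ^ 2 + (a ^ 2 + 2 * σ ^ 2 * s * (-a + η) - 1) * t₁
          + betaSeq a σ η s 1 = 0) ∧
      (2 * σ ^ 2 * t₂ ^ 2 + (a ^ 2 + 2 * σ ^ 2 * s * (-a + η) - 1) * t₂
          + betaSeq a σ η s 1 = 0) ∧
      -- (β_ℓ) is nonincreasing with β_ℓ ≤ β₁ < 0 for all ℓ ≥ 1, and β_ℓ → t₁
      (∀ ℓ : ℕ, 1 ≤ ℓ → betaSeq a σ η s (ℓ + 1) ≤ betaSeq a σ η s ℓ) ∧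
      (∀ ℓ : ℕ, 1 ≤ ℓ → betaSeq a σ η s ℓ ≤ betaSeq a σ η s 1) ∧
      betaSeq a σ η s 1 < 0 ∧
      Tendsto (fun ℓ : ℕ => betaSeq a σ η s ℓ) atTop (nhds t₁)) := by
  have hc : (0 : ℝ) < 2 * σ ^ 2 := by positivity
  have hβ := betaSeq_one_neg a hσ hs0 hs1
  obtain ⟨t₁, t₂, ht₁, ht₂, hsum, hprod⟩ :=
    exists_vieta_of_neg (b := a ^ 2 + 2 * σ ^ 2 * s * (-a + η) - 1) hc hβ
  have hsum' := hsum.trans (neg_sub _ _)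
  have hct₂ := mul_root_le_one hc ht₁ hsum' hprod
    (by rw [coeff_add_mul_betaSeq_one]; positivity)
  -- `β₁ = t₁ · (2σ²t₂)` with `t₁ < 0` and `2σ²t₂ ≤ 1`
  have hβ_mem : betaSeq a σ η s 1 ∈ Icc t₁ 0 :=
    ⟨by linarith [mul_le_mul_of_nonpos_left hct₂ ht₁.le], hβ.le⟩
  have hanti := antitone_iterate_riccatiMap hc.le hsum' hprod ht₂.le hct₂ hβ_mem
  have hlim := tendsto_iterate_riccatiMap hc hsum' hprod ht₂ hct₂ hβ_mem
  simp only [← betaSeq_succ_eq_iterate] at hanti hlim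
  refine ⟨Gam_eq_discrim a σ η s ▸ discrim_pos_of_neg hc hβ, t₁, t₂, ht₁, ht₂, ht₁.trans ht₂,
    by simp [quadratic_eq_mul_sub_mul_sub hsum hprod],
    by simp [quadratic_eq_mul_sub_mul_sub hsum hprod],
    fun ℓ hℓ => ?_, fun ℓ hℓ => ?_, hβ, (tendsto_add_atTop_iff_nat 1).1 hlim⟩
  · obtain ⟨n, rfl⟩ := Nat.exists_eq_add_of_le' hℓ
    exact hanti n.le_succ
  · obtain ⟨n, rfl⟩ := Nat.exists_eq_add_of_le' hℓ
    exact hanti n.zero_le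

theorem statement10 (a σ η s : ℝ) (ha : 1 < a) (hσ : 0 < σ) (hη : 0 < η)
    (hs0 : 0 < s) (hs1 : s < 2 * η / σ ^ 2) :
    -- the discriminant is strictly positive
    0 < Gam a σ η s ∧
    -- the quadratic has two distinct real roots t₁ < 0 < t₂
    (∃ t₁ t₂ : ℝ,
      t₁ < 0 ∧ 0 < t₂ ∧ t₁ < t₂ ∧
      (2 * σ ^ 2 * t₁ ^ 2 + (a ^ 2 + 2 * σ ^ 2 * s * (-a + η) - 1) * t₁
          + betaSeq a σ η s 1 = 0) ∧
      (2 * σ ^ 2 * t₂ ^ 2 + (a ^ 2 + 2 * σ ^ 2 * s * (-a + η) - 1) * t₂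
          + betaSeq a σ η s 1 = 0) ∧
      -- (β_ℓ) is nonincreasing with β_ℓ ≤ β₁ < 0 for all ℓ ≥ 1, and β_ℓ → t₁
      (∀ ℓ : ℕ, 1 ≤ ℓ → betaSeq a σ η s (ℓ + 1) ≤ betaSeq a σ η s ℓ) ∧
      (∀ ℓ : ℕ, 1 ≤ ℓ → betaSeq a σ η s ℓ ≤ betaSeq a σ η s 1) ∧
      betaSeq a σ η s 1 < 0 ∧
      Tendsto (fun ℓ : ℕ => betaSeq a σ η s ℓ) atTop (nhds t₁)) :=
  statement10_general a σ η s hσ hs0 hs1
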